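/- arXiv:1602.06258 — 3 statements merged into one kernel-verified Lean document; each statement's English description precedes it below -/
import Mathlib

section
/- Let λ_1,...,λ_m, d_1,...,d_m be positive reals and let Δ = ∑_i λ_i d_i. Suppose a searcher visits items in the order 1,...,m and the time to reach item i is at least ∑_{j ≤ i} λ_j. If the hider chooses item i with probability λ_i d_i / Δ, then the expected normalized search time (expected value of search time divided by d_i) is at least (∑_{i ≤ j} λ_i λ_j)/Δ, which in turn is at least (∑_i λ_i)²/(2Δ). -/
theorem hider_lower_bound (m : ℕ) (lam d T : Fin m → ℝ)
    (hlam : ∀ i, 0 < lam i) (hd : ∀ i, 0 < d i)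
    (hT : ∀ i, T i ≥ ∑ j ∈ Finset.univ.filter (fun j : Fin m => j ≤ i), lam j) :
    (∑ i, (lam i * d i / (∑ j, lam j * d j)) * (T i / d i)
        ≥ (∑ p ∈ Finset.univ.filter (fun p : Fin m × Fin m => p.1 ≤ p.2),
            lam p.1 * lam p.2) / (∑ j, lam j * d j)) ∧
    ((∑ p ∈ Finset.univ.filter (fun p : Fin m × Fin m => p.1 ≤ p.2),
        lam p.1 * lam p.2) / (∑ j, lam j * d j)
      ≥ (∑ i, lam i) ^ 2 / (2 * ∑ j, lam j * d j)) := by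
  rcases Nat.eq_zero_or_pos m with hm | hm
  · subst hm
    simp
  have hΔ : 0 < ∑ j, lam j * d j := by
    apply Finset.sum_pos
    · intro i _; exact mul_pos (hlam i) (hd i)
    · simpa [Finset.univ_nonempty_iff] using Fin.pos_iff_nonempty.mp hm
  set Δ := ∑ j, lam j * d j with hΔdef
  set S := ∑ p ∈ Finset.univ.filter (fun p : Fin m × Fin m => p.1 ≤ p.2),
      lam p.1 * lam p.2 with hSdef
  have hS : S = ∑ i, (∑ j ∈ Finset.univ.filter (fun j : Fin m => j ≤ i), lam j) * lam i := by
    rw [hSdef, Finset.sum_filter, Fintype.sum_prod_type, Finset.sum_comm]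
    refine Finset.sum_congr rfl fun i _ => ?_
    rw [Finset.sum_filter, Finset.sum_mul]
    refine Finset.sum_congr rfl fun j _ => ?_
    rw [ite_mul, zero_mul]
  constructor
  · have h1 : ∑ i, (lam i * d i / Δ) * (T i / d i) = (∑ i, lam i * T i) / Δ := by
      rw [Finset.sum_div]
      refine Finset.sum_congr rfl fun i _ => ?_
      field_simp [hΔ.ne', (hd i).ne']
    rw [h1, ge_iff_le, div_le_div_iff_of_pos_right hΔ, hS]
    refine Finset.sum_le_sum fun i _ => ?_
    rw [mul_comm]
    exact mul_le_mul_of_nonneg_left (hT i) (hlam i).le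
  · have hsq : (∑ i, lam i) ^ 2 = ∑ p : Fin m × Fin m, lam p.1 * lam p.2 := by
      rw [sq, Finset.sum_mul_sum, Fintype.sum_prod_type]
    have hsplit := Finset.sum_filter_add_sum_filter_not Finset.univ
      (fun p : Fin m × Fin m => p.1 ≤ p.2) (fun p => lam p.1 * lam p.2)
    have hswap : ∑ p ∈ Finset.univ.filter (fun p : Fin m × Fin m => ¬ p.1 ≤ p.2),
        lam p.1 * lam p.2
        = ∑ p ∈ Finset.univ.filter (fun p : Fin m × Fin m => ¬ p.2 ≤ p.1),
        lam p.1 * lam p.2 := by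
      refine Finset.sum_equiv (Equiv.prodComm (Fin m) (Fin m)) ?_ ?_
      · intro p; simp
      · intro p _; simp [mul_comm]
    have hsub : ∑ p ∈ Finset.univ.filter (fun p : Fin m × Fin m => ¬ p.2 ≤ p.1),
        lam p.1 * lam p.2 ≤ S := by
      rw [hSdef]
      apply Finset.sum_le_sum_of_subset_of_nonneg
      · intro p hp
        simp only [Finset.mem_filter, Finset.mem_univ, true_and] at hp ⊢
        exact le_of_not_ge hp
      · intro p _ _
        exact mul_nonneg (hlam p.1).le (hlam p.2).le
    have h2 : (∑ i, lam i) ^ 2 ≤ 2 * S := by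
      rw [hsq, ← hsplit, two_mul]
      exact add_le_add le_rfl (hswap ▸ hsub)
    rw [ge_iff_le, div_le_div_iff₀ (by positivity) hΔ]
    nlinarith [hΔ, h2, sq_nonneg (∑ i, lam i)]
end

section
/- For positive reals c (edge length of new vertex), μ (total length of old edges), and positive integer k with μ/k ≤ c ≤ 2μ/k and k ≥ 1, define δ = (k+1)(1 + c/μ)/2 − (μ/(2c) + 1 − μ/(2kc)). Then δ ≥ 0. -/
theorem star_dominance (c mu : ℝ) (k : ℕ) (hc : 0 < c) (hmu : 0 < mu) (hk : 1 ≤ k)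
    (h1 : mu / k ≤ c) (h2 : c ≤ 2 * mu / k) :
    ((k : ℝ) + 1) * (1 + c / mu) / 2 - (mu / (2 * c) + 1 - mu / (2 * k * c)) ≥ 0 := by
  have hk' : (1:ℝ) ≤ (k:ℝ) := by exact_mod_cast hk
  have hk0 : (0:ℝ) < k := by linarith
  have h1' : mu ≤ c * k := by rw [div_le_iff₀ hk0] at h1; linarith
  have h2' : c * k ≤ 2 * mu := by rw [le_div_iff₀ hk0] at h2; linarith
  have key : ((k:ℝ)+1)*(mu+c)*(k*c) - mu^2*k - 2*mu*c*k + mu^2 ≥ 0 := by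
    nlinarith [sq_nonneg (c*k - mu), mul_pos hc hmu, sq_nonneg (c*k - 2*mu),
      mul_nonneg (sub_nonneg.2 h1') (sub_nonneg.2 h2'), sq_nonneg mu, sq_nonneg c]
  have heq : ((k : ℝ) + 1) * (1 + c / mu) / 2 - (mu / (2 * c) + 1 - mu / (2 * k * c))
      = (((k:ℝ)+1)*(mu+c)*(k*c) - mu^2*k - 2*mu*c*k + mu^2) / (2*mu*c*k) := by
    field_simp
    ring
  rw [heq]
  positivity
end

section
/- Consider the 2×2 zero-sum game with payoff matrix (row player minimizing): rows R⁺, R⁻; columns C₁, C₂; payoffs M(R⁺,C₁) = (k+1)/2, M(R⁺,C₂) = 1/x + 1, M(R⁻,C₁) = (k+1)(1+x)/2, M(R⁻,C₂) = 1/(2x) + 1 − 1/(2kx), where k ≥ 1 is an integer and x > 0 is a real with 1/k ≤ x ≤ 2/k. Then the value of this game is at most k/2 + 1. -/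
/-- The value of the 2×2 zero-sum game (row player minimizing) is at most k/2 + 1:
there is a mixed row strategy guaranteeing payoff at most k/2 + 1 against both columns. -/
theorem star_game_value (k : ℕ) (hk : 1 ≤ k) (x : ℝ)
    (hx1 : 1 / (k : ℝ) ≤ x) (hx2 : x ≤ 2 / (k : ℝ)) :
    ∃ p : ℝ, 0 ≤ p ∧ p ≤ 1 ∧
      max (p * (((k : ℝ) + 1) / 2) + (1 - p) * (((k : ℝ) + 1) * (1 + x) / 2))
          (p * (1 / x + 1) + (1 - p) * (1 / (2 * x) + 1 - 1 / (2 * k * x)))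
        ≤ (k : ℝ) / 2 + 1 := by
  have hk0 : (0:ℝ) < k := by exact_mod_cast hk
  have hx0 : 0 < x := lt_of_lt_of_le (by positivity) hx1
  have hk1 : (0:ℝ) < (k:ℝ) + 1 := by linarith
  have hkx : 1 ≤ (k:ℝ) * x := by
    rw [div_le_iff₀ hk0] at hx1; linarith
  refine ⟨1 - 1 / (((k:ℝ) + 1) * x), ?_, ?_, ?_⟩
  · have h1 : 1 / (((k:ℝ) + 1) * x) ≤ 1 := by
      rw [div_le_one (by positivity)]
      nlinarith
    linarith
  · have : 0 < 1 / (((k:ℝ) + 1) * x) := by positivity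
    linarith
  · apply max_le
    · have : (1 - 1 / (((k:ℝ) + 1) * x)) * (((k : ℝ) + 1) / 2) +
          (1 - (1 - 1 / (((k:ℝ) + 1) * x))) * (((k : ℝ) + 1) * (1 + x) / 2)
          = (k : ℝ) / 2 + 1 := by
        field_simp
        ring
      linarith [this.le]
    · have heq : (1 - 1 / (((k:ℝ) + 1) * x)) * (1 / x + 1) +
          (1 - (1 - 1 / (((k:ℝ) + 1) * x))) * (1 / (2 * x) + 1 - 1 / (2 * (k:ℝ) * x))
          = ((k:ℝ)/2 + 1) - ((k:ℝ)*x - 1)^2 / (2 * (k:ℝ) * x^2) := by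
        field_simp
        ring
      have hpos : 0 ≤ ((k:ℝ)*x - 1)^2 / (2 * (k:ℝ) * x^2) := by positivity
      rw [heq]
      linarith
end
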